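/- The n-dimensional kernel Φ(τ,Y,a,B) satisfies Φ(τ,Y,a,B) ≤ (4πτ)^{-n/2}·det(Θ/sinh Θ)^{1/2}·exp{-τ·a(sinh Θ♯/(Θ♯ cosh Θ♯))aᵀ} for all Y, a ∈ ℝⁿ, n×n matrices B, and τ > 0. -/

import Mathlib

/-!
Write `Θ = U D Uᵀ`, `Θ♯ = V E Vᵀ` with `D`, `E` diagonal and nonnegative, and put `A = Uᵀ B V`.
Then `D² = 4τ² A Aᵀ` and `E² = 4τ² Aᵀ A`, so `D² A = A E²`, and by nonnegativity `f(D) A = A f(E)`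
for every function `f`. In the coordinates `y = Uᵀ Y`, `b = Vᵀ a`, `w = A b` the `Y`-dependent
part of the exponent is a sum of one-variable quadratics in the `yᵢ`; completing the square bounds
it by `4τ³ wᵀ φ(D) w`, where `φ = g² / c` for `g x = (cosh x - 1)/(x sinh x)` and
`c x = x cosh x / sinh x`, and the intertwining turns this into `τ bᵀ E² φ(E) b`. Finally
`x² φ(x) = 2 g(x) - sinh x / (x cosh x)` is the identity `cosh² x - sinh² x = 1`.
-/

open Real Matrix

/-- Apply a scalar function spectrally, via an orthogonal diagonalization. -/
noncomputable def matFun {n : ℕ} (U : Matrix (Fin n) (Fin n) ℝ) (d : Fin n → ℝ)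
    (f : ℝ → ℝ) : Matrix (Fin n) (Fin n) ℝ :=
  U * Matrix.diagonal (fun i => f (d i)) * Uᵀ

/-- `x / sinh x`, extended by its limit `1` at `x = 0`. -/
noncomputable def xDivSinh (x : ℝ) : ℝ := if x = 0 then 1 else x / Real.sinh x

/-- `x cosh x / sinh x`, extended by its limit `1` at `x = 0`. -/
noncomputable def xCoshDivSinh (x : ℝ) : ℝ :=
  if x = 0 then 1 else x * Real.cosh x / Real.sinh x

/-- `(cosh x - 1)/(x sinh x)`, extended by its limit `1/2` at `x = 0`. -/
noncomputable def coshSubOneDivXSinh (x : ℝ) : ℝ :=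
  if x = 0 then 1 / 2 else (Real.cosh x - 1) / (x * Real.sinh x)

/-- `sinh x / (x cosh x)`, extended by its limit `1` at `x = 0`. -/
noncomputable def sinhDivXCosh (x : ℝ) : ℝ :=
  if x = 0 then 1 else Real.sinh x / (x * Real.cosh x)

theorem xCoshDivSinh_pos (x : ℝ) : 0 < xCoshDivSinh x := by
  unfold xCoshDivSinh
  split_ifs with hx
  · exact one_pos
  · rcases lt_or_gt_of_ne hx with hx | hx
    · exact div_pos_of_neg_of_neg (mul_neg_of_neg_of_pos hx (cosh_pos x)) (sinh_neg_iff.mpr hx)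
    · exact div_pos (mul_pos hx (cosh_pos x)) (sinh_pos_iff.mpr hx)

theorem sq_mul_coshSubOneDivXSinh_sq_div_xCoshDivSinh (x : ℝ) :
    x ^ 2 * (coshSubOneDivXSinh x ^ 2 / xCoshDivSinh x) =
      2 * coshSubOneDivXSinh x - sinhDivXCosh x := by
  unfold coshSubOneDivXSinh sinhDivXCosh xCoshDivSinh
  split_ifs with hx
  · simp [hx]
  · have hs : sinh x ≠ 0 := sinh_ne_zero.mpr hx
    have hc : cosh x ≠ 0 := (cosh_pos x).ne'
    field_simp
    linear_combination -cosh_sq x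

theorem neg_mul_sq_sub_mul_le (τ m g y w : ℝ) (hτ : 0 < τ) (hm : 0 < m) :
    -(1 / (4 * τ)) * (m * (y * y)) - 2 * τ * (g * (y * w)) ≤
      4 * τ ^ 3 * (g ^ 2 / m * (w * w)) := by
  have hsq : 4 * τ ^ 3 * (g ^ 2 / m * (w * w)) -
      (-(1 / (4 * τ)) * (m * (y * y)) - 2 * τ * (g * (y * w))) =
        (m * y + 4 * τ ^ 2 * g * w) ^ 2 / (4 * τ * m) := by
    field_simp
    ring
  rw [← sub_nonneg, hsq]
  positivity

section Matrix

variable {ι κ μ : Type*} [Fintype ι] [Fintype κ] [Fintype μ]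

theorem dotProduct_diagonal_mulVec [DecidableEq ι] {R : Type*} [CommSemiring R]
    (v x z : ι → R) : x ⬝ᵥ (diagonal v *ᵥ z) = ∑ i, v i * (x i * z i) := by
  simp only [dotProduct, mulVec_diagonal]
  exact Finset.sum_congr rfl fun i _ => by ring

theorem dotProduct_mul_mul_transpose_mulVec {R : Type*} [CommSemiring R]
    (U : Matrix ι κ R) (M : Matrix κ μ R) (V : Matrix ι μ R) (x z : ι → R) :
    x ⬝ᵥ ((U * M * Vᵀ) *ᵥ z) = (Uᵀ *ᵥ x) ⬝ᵥ (M *ᵥ (Vᵀ *ᵥ z)) := by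
  rw [← mulVec_mulVec, ← mulVec_mulVec, dotProduct_mulVec, mulVec_transpose U]

theorem diagonal_sq_eq_smul_mul_transpose [DecidableEq ι] [DecidableEq κ] {R : Type*} [CommRing R]
    {U : Matrix ι ι R} {B : Matrix ι κ R} {V : Matrix κ κ R} {d : ι → R} {c : R}
    (hU : U * Uᵀ = 1) (hV : V * Vᵀ = 1) (h : (U * diagonal d * Uᵀ) ^ 2 = c • (B * Bᵀ)) :
    diagonal (fun i => d i ^ 2) = c • ((Uᵀ * B * V) * (Uᵀ * B * V)ᵀ) := by
  have hUU : Uᵀ * U = 1 := mul_eq_one_comm.mp hU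
  have hUU' : ∀ X : Matrix ι ι R, Uᵀ * (U * X) = X := fun X => by
    rw [← Matrix.mul_assoc, hUU, Matrix.one_mul]
  have hVV' : ∀ X : Matrix κ ι R, V * (Vᵀ * X) = X := fun X => by
    rw [← Matrix.mul_assoc, hV, Matrix.one_mul]
  calc diagonal (fun i => d i ^ 2) = Uᵀ * (U * diagonal d * Uᵀ) ^ 2 * U := by
        simp only [sq, Matrix.mul_assoc, hUU, hUU', Matrix.mul_one, diagonal_mul_diagonal]
    _ = c • ((Uᵀ * B * V) * (Uᵀ * B * V)ᵀ) := by
        rw [h]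
        simp only [transpose_mul, transpose_transpose, Matrix.mul_smul, Matrix.smul_mul,
          Matrix.mul_assoc, hVV']

theorem diagonal_comp_mul_eq_mul_diagonal_comp [DecidableEq ι] [DecidableEq κ]
    {d : ι → ℝ} {e : κ → ℝ} (hd : ∀ i, 0 ≤ d i) (he : ∀ j, 0 ≤ e j) {A : Matrix ι κ ℝ}
    (h : diagonal (fun i => d i ^ 2) * A = A * diagonal (fun j => e j ^ 2)) (f : ℝ → ℝ) :
    diagonal (fun i => f (d i)) * A = A * diagonal (fun j => f (e j)) := by
  ext i j
  have hij := congr_fun₂ h i j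
  simp only [diagonal_mul, mul_diagonal] at hij ⊢
  rcases eq_or_ne (A i j) 0 with hA | hA
  · simp [hA]
  · have hsq : d i ^ 2 = e j ^ 2 := mul_right_cancel₀ hA (hij.trans (mul_comm _ _))
    rw [(pow_left_inj₀ (hd i) (he j) two_ne_zero).mp hsq, mul_comm]

theorem neg_dotProduct_diagonal_sub_le [DecidableEq ι] {τ : ℝ}
    (hτ : 0 < τ) {m : ι → ℝ} (hm : ∀ i, 0 < m i) (g y w : ι → ℝ) :
    -(1 / (4 * τ)) * (y ⬝ᵥ (diagonal m *ᵥ y)) - 2 * τ * (y ⬝ᵥ (diagonal g *ᵥ w)) ≤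
      4 * τ ^ 3 * (w ⬝ᵥ (diagonal (fun i => g i ^ 2 / m i) *ᵥ w)) := by
  simp only [dotProduct_diagonal_mulVec, Finset.mul_sum, ← Finset.sum_sub_distrib]
  exact Finset.sum_le_sum fun i _ => neg_mul_sq_sub_mul_le τ (m i) (g i) (y i) (w i) hτ (hm i)

theorem exponent_le_of_intertwining [DecidableEq ι] [DecidableEq κ] {τ : ℝ} (hτ : 0 < τ)
    {A : Matrix ι κ ℝ} {d : ι → ℝ} {e : κ → ℝ}
    (hA : (4 * τ ^ 2) • (Aᵀ * A) = diagonal (fun j => e j ^ 2))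
    (hAde : diagonal (fun i => coshSubOneDivXSinh (d i) ^ 2 / xCoshDivSinh (d i)) * A =
      A * diagonal (fun j => coshSubOneDivXSinh (e j) ^ 2 / xCoshDivSinh (e j)))
    (y : ι → ℝ) (b : κ → ℝ) :
    -(1 / (4 * τ)) * (y ⬝ᵥ (diagonal (fun i => xCoshDivSinh (d i)) *ᵥ y))
        - 2 * τ * (y ⬝ᵥ (diagonal (fun i => coshSubOneDivXSinh (d i)) *ᵥ (A *ᵥ b)))
        - 2 * τ * (b ⬝ᵥ (diagonal (fun j => coshSubOneDivXSinh (e j)) *ᵥ b)) ≤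
      -τ * (b ⬝ᵥ (diagonal (fun j => sinhDivXCosh (e j)) *ᵥ b)) := by
  set φ : ℝ → ℝ := fun x => coshSubOneDivXSinh x ^ 2 / xCoshDivSinh x
  have hsquare := neg_dotProduct_diagonal_sub_le hτ (fun i => xCoshDivSinh_pos (d i))
    (fun i => coshSubOneDivXSinh (d i)) y (A *ᵥ b)
  have hmatrix : (4 * τ ^ 2) • (Aᵀ * diagonal (fun i => φ (d i)) * A) =
      diagonal (fun j => e j ^ 2 * φ (e j)) := by
    rw [Matrix.mul_assoc, hAde, ← Matrix.mul_assoc, ← Matrix.smul_mul, hA, diagonal_mul_diagonal]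
  have hrest : 4 * τ ^ 3 * ((A *ᵥ b) ⬝ᵥ (diagonal (fun i => φ (d i)) *ᵥ (A *ᵥ b)))
      - 2 * τ * (b ⬝ᵥ (diagonal (fun j => coshSubOneDivXSinh (e j)) *ᵥ b)) =
      -τ * (b ⬝ᵥ (diagonal (fun j => sinhDivXCosh (e j)) *ᵥ b)) := by
    have hb : (A *ᵥ b) ⬝ᵥ (diagonal (fun i => φ (d i)) *ᵥ (A *ᵥ b)) =
        b ⬝ᵥ ((Aᵀ * diagonal (fun i => φ (d i)) * A) *ᵥ b) := by
      simpa using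
        (dotProduct_mul_mul_transpose_mulVec Aᵀ (diagonal fun i => φ (d i)) Aᵀ b b).symm
    rw [hb, show 4 * τ ^ 3 = τ * (4 * τ ^ 2) by ring, mul_assoc, ← smul_eq_mul (4 * τ ^ 2),
      ← dotProduct_smul, ← Matrix.smul_mulVec, hmatrix]
    simp only [dotProduct_diagonal_mulVec, Finset.mul_sum, ← Finset.sum_sub_distrib]
    refine Finset.sum_congr rfl fun j _ => ?_
    linear_combination τ * (b j * b j) * sq_mul_coshSubOneDivXSinh_sq_div_xCoshDivSinh (e j)
  linarith

end Matrix

/-- Proposition 4(ii): decay bound for the `n`-dimensional kernel `Φ(τ,Y,a,B)`. -/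
theorem phi_n_dim_decay_bound {n : ℕ} (τ : ℝ) (hτ : 0 < τ)
    (Y a : Fin n → ℝ) (B U V : Matrix (Fin n) (Fin n) ℝ) (d e : Fin n → ℝ)
    (hU : U * Uᵀ = 1) (hV : V * Vᵀ = 1)
    (hd : ∀ i, 0 ≤ d i) (he : ∀ i, 0 ≤ e i)
    (hΘ : (U * Matrix.diagonal d * Uᵀ) ^ 2 = (4 * τ ^ 2) • (B * Bᵀ))
    (hΘs : (V * Matrix.diagonal e * Vᵀ) ^ 2 = (4 * τ ^ 2) • (Bᵀ * B)) :
    (1 / Real.sqrt (4 * π * τ)) ^ n *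
        Real.sqrt (Matrix.det (matFun U d xDivSinh)) *
        Real.exp
          (-(1 / (4 * τ)) * (Y ⬝ᵥ (matFun U d xCoshDivSinh *ᵥ Y))
            - 2 * τ * (Y ⬝ᵥ ((matFun U d coshSubOneDivXSinh * B) *ᵥ a))
            - 2 * τ * (a ⬝ᵥ (matFun V e coshSubOneDivXSinh *ᵥ a))) ≤
      (1 / Real.sqrt (4 * π * τ)) ^ n *
        Real.sqrt (Matrix.det (matFun U d xDivSinh)) *
        Real.exp (-τ * (a ⬝ᵥ (matFun V e sinhDivXCosh *ᵥ a))) := by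
  gcongr _ * exp ?_
  set A := Uᵀ * B * V
  have hUU : Uᵀ * U = 1 := mul_eq_one_comm.mp hU
  have hBA : B = U * A * Vᵀ := by
    simp only [A, ← Matrix.mul_assoc, hU, Matrix.one_mul]
    rw [Matrix.mul_assoc, hV, Matrix.mul_one]
  have hAAt := diagonal_sq_eq_smul_mul_transpose hU hV hΘ
  have hAtA : diagonal (fun j => e j ^ 2) = (4 * τ ^ 2) • (Aᵀ * A) := by
    simpa [A, transpose_mul, Matrix.mul_assoc] using
      diagonal_sq_eq_smul_mul_transpose (B := Bᵀ) hV hU (by rwa [transpose_transpose])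
  have hAde := diagonal_comp_mul_eq_mul_diagonal_comp hd he (A := A) (by
    rw [hAAt, hAtA, Matrix.smul_mul, Matrix.mul_smul, Matrix.mul_assoc])
  have hcross : matFun U d coshSubOneDivXSinh * B =
      U * (diagonal (fun i => coshSubOneDivXSinh (d i)) * A) * Vᵀ := by
    rw [matFun, hBA]
    simp only [Matrix.mul_assoc]
    rw [← Matrix.mul_assoc Uᵀ U, hUU, Matrix.one_mul]
  rw [hcross]
  simp only [matFun, dotProduct_mul_mul_transpose_mulVec]
  rw [← mulVec_mulVec]
  exact exponent_le_of_intertwining hτ hAtA.symm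
    (hAde fun x => coshSubOneDivXSinh x ^ 2 / xCoshDivSinh x) _ _
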